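/- Let 𝔼 and 𝔽 be nonempty, convex, closed sets of CPTN super-operators on L(H_V), H_V finite-dimensional. Define 𝔼 ≤_T^s 𝔽 iff for all sets of effects Θ, Ψ, Θ ≼_dem 𝔼†(Ψ) implies Θ ≼_dem 𝔽†(Ψ), where 𝔼†(Ψ) = {E†(N) : E ∈ 𝔼, N ∈ Ψ}. Then 𝔼 ≤_T^s 𝔽 if and only if 𝔼 ≤_S 𝔽 in the Smyth order induced by the complete-positivity order on super-operators (for every F ∈ 𝔽 there exists E ∈ 𝔼 with F − E completely positive). -/

import Mathlib

open Matrix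
open scoped ComplexOrder

noncomputable section

/-- Löwner order: `A ⊑ B` iff `B - A` is positive semidefinite. -/
def Loewner {d : Type*} [Fintype d] (A B : Matrix d d ℂ) : Prop :=
  (B - A).PosSemidef

/-- An effect: a positive semidefinite operator bounded above by the identity. -/
def IsEffect {d : Type*} [Fintype d] [DecidableEq d] (M : Matrix d d ℂ) : Prop :=
  M.PosSemidef ∧ (1 - M).PosSemidef

/-- A (partial) density operator: positive semidefinite with trace at most 1. -/
def IsDensity {d : Type*} [Fintype d] (ρ : Matrix d d ℂ) : Prop :=
  ρ.PosSemidef ∧ ρ.trace.re ≤ 1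

/-- An orthogonal projector: Hermitian idempotent. -/
def IsProj {d : Type*} [Fintype d] (P : Matrix d d ℂ) : Prop :=
  P.IsHermitian ∧ P * P = P

-- Demonic expectation: `inf_{M ∈ Θ} tr(M ρ)`, with the convention that the
-- infimum over the empty set is `tr ρ`.
open Classical in
def demExp {d : Type*} [Fintype d] (Θ : Set (Matrix d d ℂ)) (ρ : Matrix d d ℂ) : ℝ :=
  if Θ = ∅ then ρ.trace.re else sInf ((fun M => (M * ρ).trace.re) '' Θ)

/-- Angelic expectation: `sup_{M ∈ Θ} tr(M ρ)`; note `sSup ∅ = 0` in `ℝ`,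
matching the convention that the supremum over the empty set is `0`. -/
def angExp {d : Type*} [Fintype d] (Θ : Set (Matrix d d ℂ)) (ρ : Matrix d d ℂ) : ℝ :=
  sSup ((fun M => (M * ρ).trace.re) '' Θ)

/-- The extension `I_{Fin m} ⊗ Φ` of a super-operator `Φ`, acting blockwise. -/
def tensorMap {n : ℕ} (Φ : Matrix (Fin n) (Fin n) ℂ → Matrix (Fin n) (Fin n) ℂ) (m : ℕ)
    (A : Matrix (Fin m × Fin n) (Fin m × Fin n) ℂ) :
    Matrix (Fin m × Fin n) (Fin m × Fin n) ℂ :=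
  fun p q => Φ (Matrix.of fun a b => A (p.1, a) (q.1, b)) p.2 q.2

/-- Complete positivity: every extension `I_K ⊗ Φ` maps positive semidefinite
matrices to positive semidefinite matrices. -/
def IsCP {n : ℕ} (Φ : Matrix (Fin n) (Fin n) ℂ → Matrix (Fin n) (Fin n) ℂ) : Prop :=
  ∀ (m : ℕ) (A : Matrix (Fin m × Fin n) (Fin m × Fin n) ℂ),
    A.PosSemidef → (tensorMap Φ m A).PosSemidef

/-- Trace-nonincreasing on positive operators. -/
def IsTNI {n : ℕ} (Φ : Matrix (Fin n) (Fin n) ℂ → Matrix (Fin n) (Fin n) ℂ) : Prop :=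
  ∀ A : Matrix (Fin n) (Fin n) ℂ, A.PosSemidef → (Φ A).trace.re ≤ A.trace.re

/-- Trace-preserving on positive operators. -/
def IsTP {n : ℕ} (Φ : Matrix (Fin n) (Fin n) ℂ → Matrix (Fin n) (Fin n) ℂ) : Prop :=
  ∀ A : Matrix (Fin n) (Fin n) ℂ, A.PosSemidef → (Φ A).trace = A.trace

/-- CPTN super-operator: linear, completely positive, and trace-nonincreasing. -/
def IsCPTN {n : ℕ} (Φ : Matrix (Fin n) (Fin n) ℂ → Matrix (Fin n) (Fin n) ℂ) : Prop :=
  IsLinearMap ℂ Φ ∧ IsCP Φ ∧ IsTNI Φ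

/-- The Choi matrix `J(Φ) = (Φ ⊗ I)(Ω)` of `Φ`, where `Ω` is the maximally
entangled state on `H ⊗ H`. -/
def choi {n : ℕ} (Φ : Matrix (Fin n) (Fin n) ℂ → Matrix (Fin n) (Fin n) ℂ) :
    Matrix (Fin n × Fin n) (Fin n × Fin n) ℂ :=
  fun p q => (1 / (n : ℂ)) * Φ (Matrix.single p.2 q.2 1) p.1 q.1


/-!
If `F - E` is completely positive then `tr (N ((id ⊗ E) ρ)) ≤ tr (N ((id ⊗ F) ρ))` for all
positive `N` and `ρ`, so under the Smyth order every value in the `𝔽`-side infimum dominates a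
value in the `𝔼`-side one.

Conversely, suppose some `F ∈ 𝔽` lies above no `E ∈ 𝔼`. By Choi's theorem the Choi matrix `J F`
avoids `J 𝔼 + PSD`, which is convex and closed because `J 𝔼` is compact. A functional separating
them is nonnegative on the PSD cone, hence is `X ↦ tr (W X)` for a positive matrix `W`. Rescaled to
an effect `N`, the specification `Θ = 𝔼†{N}`, `Ψ = {N}` holds for `𝔼` trivially but fails for `𝔽`
at the maximally entangled state.
-/

theorem IsLinearMap.apply_eq_sum_single {α β M : Type*} [Fintype α] [Fintype β]
    [DecidableEq α] [DecidableEq β] [AddCommMonoid M] [Module ℂ M] {f : Matrix α β ℂ → M}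
    (hf : IsLinearMap ℂ f) (X : Matrix α β ℂ) :
    f X = ∑ i, ∑ j, X i j • f (Matrix.single i j 1) := by
  have h := congrArg (IsLinearMap.mk' f hf) (Matrix.matrix_eq_sum_single X)
  simp only [map_sum, IsLinearMap.mk'_apply] at h
  rw [h]
  refine Finset.sum_congr rfl fun i _ => Finset.sum_congr rfl fun j _ => ?_
  rw [← hf.map_smul, Matrix.smul_single, smul_eq_mul, mul_one]

theorem nonneg_of_forall_lt_add_mul {a b u : ℝ} (h : ∀ t : ℝ, 0 ≤ t → u < a + t * b) :
    0 ≤ b := by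
  by_contra! hb
  have hau : u < a := by simpa using h 0 le_rfl
  have := h ((a - u) / -b) (div_nonneg (sub_nonneg.mpr hau.le) (neg_nonneg.mpr hb.le))
  rw [div_mul_eq_mul_div, div_neg, mul_div_assoc, div_self hb.ne, mul_one] at this
  linarith

namespace Matrix

section Trace

variable {α β R : Type*} [Fintype α] [Fintype β]

theorem trace_eq_sum_trace_submatrix [AddCommMonoid R] (A : Matrix (α × β) (α × β) R) :
    A.trace = ∑ a, (A.submatrix (Prod.mk a) (Prod.mk a)).trace := by
  simp [trace, Fintype.sum_prod_type]

theorem trace_mul_eq_sum_trace_submatrix [NonUnitalNonAssocSemiring R]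
    (A B : Matrix (α × β) (α × β) R) :
    (A * B).trace = ∑ a, ∑ b,
      (A.submatrix (Prod.mk a) (Prod.mk b) * B.submatrix (Prod.mk b) (Prod.mk a)).trace := by
  simp only [trace, diag, mul_apply, submatrix_apply, Fintype.sum_prod_type]
  exact Finset.sum_congr rfl fun a _ => Finset.sum_comm

end Trace

instance instLocallyConvexSpace {m n E : Type*} [AddCommMonoid E] [TopologicalSpace E]
    [Module ℝ E] [LocallyConvexSpace ℝ E] : LocallyConvexSpace ℝ (Matrix m n E) :=
  inferInstanceAs (LocallyConvexSpace ℝ (m → n → E))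

theorem convex_setOf_posSemidef {d : Type*} : Convex ℝ {A : Matrix d d ℂ | A.PosSemidef} :=
  fun _ hA _ hB _ _ ha hb _ => (hA.smul ha).add (hB.smul hb)

variable {d : Type*} [Fintype d]

theorem dotProduct_mulVec_eq_trace_mul_vecMulVec (A : Matrix d d ℂ) (x : d → ℂ) :
    star x ⬝ᵥ (A *ᵥ x) = (A * vecMulVec x (star x)).trace := by
  rw [trace_mul_comm, vecMulVec_mul, trace_vecMulVec, dotProduct_mulVec, dotProduct_comm]

theorem posSemidef_of_forall_dotProduct_mulVec_nonneg [DecidableEq d] {A : Matrix d d ℂ}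
    (h : ∀ x : d → ℂ, 0 ≤ star x ⬝ᵥ (A *ᵥ x)) : A.PosSemidef := by
  rw [← isPositive_toEuclideanLin_iff, LinearMap.isPositive_iff_complex]
  intro x
  have hx : x.ofLp ⬝ᵥ star (A *ᵥ x.ofLp) = star (star x.ofLp ⬝ᵥ A *ᵥ x.ofLp) := by
    rw [star_dotProduct, star_star, dotProduct_comm]
  obtain ⟨hre, him⟩ := Complex.nonneg_iff.mp (h x)
  simp only [EuclideanSpace.inner_eq_star_dotProduct, toLpLin_apply, hx, Complex.star_def]
  exact ⟨Complex.ext (by simp) (by simp [← him]), hre⟩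

theorem isClosed_setOf_posSemidef [DecidableEq d] :
    IsClosed {A : Matrix d d ℂ | A.PosSemidef} := by
  have : {A : Matrix d d ℂ | A.PosSemidef} = ⋂ x : d → ℂ, {A | 0 ≤ star x ⬝ᵥ (A *ᵥ x)} := by
    ext A
    simp only [Set.mem_ofPred_eq, Set.mem_iInter]
    exact ⟨fun hA => hA.dotProduct_mulVec_nonneg, posSemidef_of_forall_dotProduct_mulVec_nonneg⟩
  rw [this]
  refine isClosed_iInter fun x => isClosed_le continuous_const ?_
  simp only [dotProduct, mulVec]
  fun_prop

namespace PosSemidef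

theorem trace_mul_nonneg [DecidableEq d] {A B : Matrix d d ℂ} (hA : A.PosSemidef)
    (hB : B.PosSemidef) : 0 ≤ (A * B).trace := by
  open scoped MatrixOrder in
  obtain ⟨C, rfl⟩ := CStarAlgebra.nonneg_iff_eq_star_mul_self.mp hA.nonneg
  rw [star_eq_conjTranspose, Matrix.mul_assoc, trace_mul_comm]
  exact (hB.mul_mul_conjTranspose_same C).trace_nonneg

theorem re_apply_le_re_trace {A : Matrix d d ℂ} (hA : A.PosSemidef) (i : d) :
    (A i i).re ≤ A.trace.re := by
  rw [trace, Complex.re_sum]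
  exact Finset.single_le_sum (fun j _ => (Complex.nonneg_iff.mp (hA.diag_nonneg (i := j))).1)
    (Finset.mem_univ i)

theorem norm_apply_le_re_trace {A : Matrix d d ℂ} (hA : A.PosSemidef) (i j : d) :
    ‖A i j‖ ≤ A.trace.re := by
  have hdet := (hA.submatrix ![i, j]).det_nonneg
  simp only [det_fin_two, submatrix_apply, Matrix.cons_val_zero, Matrix.cons_val_one] at hdet
  have hdiag (k : d) := Complex.nonneg_iff.mp (hA.diag_nonneg (i := k))
  have hsq : ‖A i j‖ ^ 2 ≤ (A i i).re * (A j j).re := by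
    have := (Complex.le_def.mp (sub_nonneg.mp hdet)).1
    rwa [← hA.1.apply j i, Complex.star_def, Complex.mul_conj, Complex.ofReal_re,
      Complex.normSq_eq_norm_sq, Complex.mul_re, ← (hdiag i).2, zero_mul, sub_zero] at this
  nlinarith [norm_nonneg (A i j), hA.re_apply_le_re_trace i, hA.re_apply_le_re_trace j,
    (hdiag i).1, (hdiag j).1]

theorem exists_isEffect_smul [DecidableEq d] {W : Matrix d d ℂ} (hW : W.PosSemidef) :
    ∃ c : ℝ, 0 < c ∧ IsEffect (c • W) := by
  open scoped MatrixOrder Matrix.Norms.L2Operator in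
  have hle : (‖W‖ • 1 - W).PosSemidef := by
    simpa [le_iff, Algebra.algebraMap_eq_smul_one] using
      IsSelfAdjoint.le_algebraMap_norm_self hW.1
  set c : ℝ := (1 + ‖W‖)⁻¹
  have hc : c * (1 + ‖W‖) = 1 := inv_mul_cancel₀ (by positivity)
  have hsplit : (1 : Matrix d d ℂ) - c • W = c • ((‖W‖ • 1 - W) + 1) := by
    linear_combination (norm := module) (-hc) • (1 : Matrix d d ℂ)
  refine ⟨c, by positivity, hW.smul (by positivity), ?_⟩
  rw [hsplit]
  exact (hle.add PosSemidef.one).smul (by positivity)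

end PosSemidef

theorem exists_eq_trace_mul [DecidableEq d] (f : Matrix d d ℂ →ₗ[ℂ] ℂ) :
    ∃ W : Matrix d d ℂ, ∀ X, f X = (W * X).trace := by
  refine ⟨of fun j i => f (single i j 1), fun X => ?_⟩
  rw [f.isLinear.apply_eq_sum_single X, trace, Finset.sum_comm]
  simp only [diag, mul_apply, of_apply, smul_eq_mul, mul_comm]

theorem exists_posSemidef_re_eq_re_trace_mul [DecidableEq d] (f : Matrix d d ℂ →ₗ[ℂ] ℂ)
    (hf : ∀ P : Matrix d d ℂ, P.PosSemidef → 0 ≤ (f P).re) :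
    ∃ W : Matrix d d ℂ, W.PosSemidef ∧ ∀ X, X.IsHermitian → (f X).re = (W * X).trace.re := by
  obtain ⟨W, hW⟩ := exists_eq_trace_mul f
  set H : Matrix d d ℂ := (2⁻¹ : ℝ) • (W + Wᴴ)
  have hH : H.IsHermitian := by simp [H, IsHermitian, conjTranspose_smul, add_comm]
  have hre (X : Matrix d d ℂ) (hX : X.IsHermitian) : (f X).re = (H * X).trace.re := by
    have : (Wᴴ * X).trace = star (W * X).trace := by
      rw [← trace_conjTranspose, conjTranspose_mul, hX.eq, trace_mul_comm]
    rw [hW, smul_mul, add_mul, trace_smul, trace_add, this, Complex.smul_re, Complex.add_re,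
      Complex.star_def, Complex.conj_re, smul_eq_mul]
    ring
  refine ⟨H, PosSemidef.of_dotProduct_mulVec_nonneg hH fun x => ?_, hre⟩
  have hP := posSemidef_vecMulVec_self_star x
  refine Complex.nonneg_iff.mpr ⟨?_, (hH.im_star_dotProduct_mulVec_self x).symm⟩
  rw [dotProduct_mulVec_eq_trace_mul_vecMulVec, ← hre _ hP.1]
  exact hf _ hP

end Matrix

section DemonicExpectation

variable {d : Type*} [Fintype d] {Θ Θ' : Set (Matrix d d ℂ)} {ρ : Matrix d d ℂ}

theorem demExp_of_nonempty (hΘ : Θ.Nonempty) :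
    demExp Θ ρ = sInf ((fun M => (M * ρ).trace.re) '' Θ) := by
  rw [demExp, if_neg hΘ.ne_empty]

theorem le_demExp {c : ℝ} (hΘ : Θ.Nonempty) (h : ∀ M ∈ Θ, c ≤ (M * ρ).trace.re) :
    c ≤ demExp Θ ρ := by
  rw [demExp_of_nonempty hΘ]
  exact le_csInf (hΘ.image _) (Set.forall_mem_image.2 h)

theorem demExp_le {M : Matrix d d ℂ} (hM : M ∈ Θ) (h0 : ∀ M ∈ Θ, 0 ≤ (M * ρ).trace.re) :
    demExp Θ ρ ≤ (M * ρ).trace.re := by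
  rw [demExp_of_nonempty ⟨M, hM⟩]
  exact csInf_le ⟨0, Set.forall_mem_image.2 h0⟩ (Set.mem_image_of_mem _ hM)

theorem demExp_le_demExp (hΘ' : Θ'.Nonempty) (h0 : ∀ M ∈ Θ, 0 ≤ (M * ρ).trace.re)
    (h : ∀ M' ∈ Θ', ∃ M ∈ Θ, (M * ρ).trace.re ≤ (M' * ρ).trace.re) :
    demExp Θ ρ ≤ demExp Θ' ρ :=
  le_demExp hΘ' fun M' hM' =>
    let ⟨_, hM, hle⟩ := h M' hM'
    (demExp_le hM h0).trans hle

end DemonicExpectation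

abbrev SuperOp (n : ℕ) : Type := Matrix (Fin n) (Fin n) ℂ → Matrix (Fin n) (Fin n) ℂ

def IsTraceAdjoint {n : ℕ} (G G' : SuperOp n) : Prop :=
  ∀ A B, (G A * B).trace = (A * G' B).trace

section TensorMap

variable {n m : ℕ} {Φ G G' : SuperOp n}

theorem submatrix_tensorMap (Φ : SuperOp n) (A : Matrix (Fin m × Fin n) (Fin m × Fin n) ℂ)
    (a b : Fin m) :
    (tensorMap Φ m A).submatrix (Prod.mk a) (Prod.mk b) =
      Φ (A.submatrix (Prod.mk a) (Prod.mk b)) :=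
  rfl

theorem trace_tensorMap_mul_of_isTraceAdjoint (hG : IsTraceAdjoint G G')
    (N ρ : Matrix (Fin m × Fin n) (Fin m × Fin n) ℂ) :
    (tensorMap G' m N * ρ).trace = (N * tensorMap G m ρ).trace := by
  rw [trace_mul_eq_sum_trace_submatrix, trace_mul_eq_sum_trace_submatrix]
  refine Finset.sum_congr rfl fun a _ => Finset.sum_congr rfl fun b _ => ?_
  rw [submatrix_tensorMap, submatrix_tensorMap, trace_mul_comm, ← hG, trace_mul_comm]

theorem re_trace_tensorMap_le (hΦ : IsTNI Φ) {A : Matrix (Fin m × Fin n) (Fin m × Fin n) ℂ}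
    (hA : A.PosSemidef) : (tensorMap Φ m A).trace.re ≤ A.trace.re := by
  rw [trace_eq_sum_trace_submatrix, trace_eq_sum_trace_submatrix A, Complex.re_sum,
    Complex.re_sum]
  exact Finset.sum_le_sum fun a _ => submatrix_tensorMap Φ A a a ▸ hΦ _ (hA.submatrix _)

theorem trace_tensorMap_le (hcp : IsCP Φ) (htni : IsTNI Φ)
    {A : Matrix (Fin m × Fin n) (Fin m × Fin n) ℂ} (hA : A.PosSemidef) :
    (tensorMap Φ m A).trace ≤ A.trace := by
  refine Complex.le_def.mpr ⟨re_trace_tensorMap_le htni hA, ?_⟩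
  rw [← (Complex.nonneg_iff.mp (hcp m A hA).trace_nonneg).2,
    ← (Complex.nonneg_iff.mp hA.trace_nonneg).2]

theorem isEffect_tensorMap_of_isTraceAdjoint (hcp : IsCP G) (htni : IsTNI G)
    (hG : IsTraceAdjoint G G') {N : Matrix (Fin m × Fin n) (Fin m × Fin n) ℂ}
    (hN : IsEffect N) : IsEffect (tensorMap G' m N) := by
  have hσ (x : Fin m × Fin n → ℂ) := hcp m _ (posSemidef_vecMulVec_self_star x)
  have hquad (x : Fin m × Fin n → ℂ) : star x ⬝ᵥ (tensorMap G' m N *ᵥ x) =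
      (N * tensorMap G m (vecMulVec x (star x))).trace := by
    rw [dotProduct_mulVec_eq_trace_mul_vecMulVec, trace_tensorMap_mul_of_isTraceAdjoint hG]
  refine ⟨posSemidef_of_forall_dotProduct_mulVec_nonneg fun x => ?_,
    posSemidef_of_forall_dotProduct_mulVec_nonneg fun x => ?_⟩
  · exact hquad x ▸ hN.1.trace_mul_nonneg (hσ x)
  · rw [sub_mulVec, dotProduct_sub, one_mulVec, hquad, sub_nonneg]
    calc (N * tensorMap G m (vecMulVec x (star x))).trace
        ≤ (tensorMap G m (vecMulVec x (star x))).trace := by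
          simpa [sub_mul, trace_sub] using hN.2.trace_mul_nonneg (hσ x)
      _ ≤ (vecMulVec x (star x)).trace :=
          trace_tensorMap_le hcp htni (posSemidef_vecMulVec_self_star x)
      _ = star x ⬝ᵥ x := by rw [trace_vecMulVec, dotProduct_comm]

theorem re_trace_tensorMap_mul_nonneg (hG : IsCP G) (hGG' : IsTraceAdjoint G G')
    {N ρ : Matrix (Fin m × Fin n) (Fin m × Fin n) ℂ} (hN : N.PosSemidef) (hρ : ρ.PosSemidef) :
    0 ≤ (tensorMap G' m N * ρ).trace.re := by
  rw [trace_tensorMap_mul_of_isTraceAdjoint hGG']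
  exact (Complex.nonneg_iff.mp (hN.trace_mul_nonneg (hG m ρ hρ))).1

theorem re_trace_mul_tensorMap_le_of_isCP_sub {E F : SuperOp n} (hFE : IsCP (F - E))
    {N ρ : Matrix (Fin m × Fin n) (Fin m × Fin n) ℂ} (hN : N.PosSemidef) (hρ : ρ.PosSemidef) :
    (N * tensorMap E m ρ).trace.re ≤ (N * tensorMap F m ρ).trace.re := by
  have hsplit : tensorMap F m ρ = tensorMap E m ρ + tensorMap (F - E) m ρ := by
    ext p q
    simp [tensorMap]
  rw [hsplit, Matrix.mul_add, trace_add, Complex.add_re, le_add_iff_nonneg_right]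
  exact (Complex.nonneg_iff.mp (hN.trace_mul_nonneg (hFE m ρ hρ))).1

end TensorMap

section Choi

open scoped Kronecker

variable {n : ℕ} {Φ : SuperOp n}

def maxEntangled (n : ℕ) : Matrix (Fin n × Fin n) (Fin n × Fin n) ℂ :=
  (n : ℝ)⁻¹ • vecMulVec (fun p => if p.1 = p.2 then 1 else 0)
    (star fun p => if p.1 = p.2 then 1 else 0)

theorem posSemidef_maxEntangled : (maxEntangled n).PosSemidef :=
  (posSemidef_vecMulVec_self_star _).smul (by positivity)

theorem isDensity_maxEntangled : IsDensity (maxEntangled n) := by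
  refine ⟨posSemidef_maxEntangled, ?_⟩
  simpa [maxEntangled, trace_smul, dotProduct, Fintype.sum_prod_type] using
    inv_mul_le_one (a := (n : ℝ))

theorem submatrix_maxEntangled (a b : Fin n) :
    (maxEntangled n).submatrix (Prod.mk a) (Prod.mk b) = (n : ℂ)⁻¹ • single a b 1 := by
  ext i j
  simp only [maxEntangled, submatrix_apply, Matrix.smul_apply, vecMulVec_apply, single_apply]
  split_ifs <;> simp_all

/-- The Choi matrix in the convention `(id ⊗ Φ) Ω`: for linear `Φ` it is `choi Φ` with the two
tensor factors swapped. -/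
def choiMatrix (Φ : SuperOp n) : Matrix (Fin n × Fin n) (Fin n × Fin n) ℂ :=
  tensorMap Φ n (maxEntangled n)

def ofChoiMatrix (J : Matrix (Fin n × Fin n) (Fin n × Fin n) ℂ) : SuperOp n :=
  fun X => of fun i j => n * ∑ k, ∑ l, X k l * J (k, i) (l, j)

theorem choiMatrix_apply (hΦ : IsLinearMap ℂ Φ) (k i l j : Fin n) :
    choiMatrix Φ (k, i) (l, j) = (n : ℂ)⁻¹ * Φ (single k l 1) i j := by
  rw [choiMatrix, tensorMap, ← submatrix, submatrix_maxEntangled, hΦ.map_smul]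
  rfl

theorem ofChoiMatrix_choiMatrix (hΦ : IsLinearMap ℂ Φ) : ofChoiMatrix (choiMatrix Φ) = Φ := by
  ext X i j
  rcases eq_or_ne n 0 with rfl | hn
  · exact i.elim0
  rw [hΦ.apply_eq_sum_single X]
  simp only [ofChoiMatrix, of_apply, choiMatrix_apply hΦ, Matrix.sum_apply, Matrix.smul_apply,
    smul_eq_mul, Finset.mul_sum]
  refine Finset.sum_congr rfl fun k _ => Finset.sum_congr rfl fun l _ => ?_
  field_simp

theorem choiMatrix_ofChoiMatrix (J : Matrix (Fin n × Fin n) (Fin n × Fin n) ℂ) :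
    choiMatrix (ofChoiMatrix J) = J := by
  ext ⟨k, i⟩ ⟨l, j⟩
  rcases eq_or_ne n 0 with rfl | hn
  · exact i.elim0
  rw [choiMatrix, tensorMap, ← submatrix, submatrix_maxEntangled]
  simp [ofChoiMatrix, single_apply, ite_and]
  field_simp

theorem continuous_ofChoiMatrix : Continuous (ofChoiMatrix (n := n)) := by
  refine continuous_pi fun X => continuous_pi fun i => continuous_pi fun j => ?_
  simp only [ofChoiMatrix, of_apply]
  fun_prop

theorem isLinearMap_choiMatrix : IsLinearMap ℝ (choiMatrix (n := n)) :=
  ⟨fun _ _ => rfl, fun _ _ => rfl⟩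

theorem posSemidef_choiMatrix (hΦ : IsCP Φ) : (choiMatrix Φ).PosSemidef :=
  hΦ n _ posSemidef_maxEntangled

theorem re_trace_choiMatrix_le_one (hΦ : IsTNI Φ) : (choiMatrix Φ).trace.re ≤ 1 :=
  (re_trace_tensorMap_le hΦ posSemidef_maxEntangled).trans isDensity_maxEntangled.2

/-- Conjugating by this 0/1 matrix contracts the second index of the first factor of `A ⊗ J`
with the first index of the second factor. -/
def choiContraction (m n : ℕ) : Matrix ((Fin m × Fin n) × (Fin n × Fin n)) (Fin m × Fin n) ℂ :=
  of fun r p => if r.1.1 = p.1 ∧ r.2.2 = p.2 ∧ r.1.2 = r.2.1 then 1 else 0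

theorem tensorMap_eq_smul_kronecker_choiMatrix {m : ℕ} (hΦ : IsLinearMap ℂ Φ)
    (A : Matrix (Fin m × Fin n) (Fin m × Fin n) ℂ) :
    tensorMap Φ m A =
      (n : ℂ) • ((choiContraction m n)ᴴ * (A ⊗ₖ choiMatrix Φ) * choiContraction m n) := by
  ext p q
  conv_lhs => rw [← ofChoiMatrix_choiMatrix hΦ]
  simp [choiContraction, ofChoiMatrix, tensorMap, mul_apply, Fintype.sum_prod_type, ite_and,
    apply_ite (starRingEnd ℂ), -mul_eq_mul_left_iff]
  rw [Finset.sum_comm]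

theorem isCP_of_posSemidef_choiMatrix (hΦ : IsLinearMap ℂ Φ) (hJ : (choiMatrix Φ).PosSemidef) :
    IsCP Φ := fun m A hA => by
  rw [tensorMap_eq_smul_kronecker_choiMatrix hΦ]
  exact ((hA.kronecker hJ).conjTranspose_mul_mul_same _).smul (Nat.cast_nonneg (α := ℂ) n)

end Choi

section Separation

open scoped Pointwise

variable {n : ℕ} {𝔼 : Set (SuperOp n)}

theorem isCompact_choiMatrix_image (h𝔼 : ∀ E ∈ 𝔼, IsCPTN E) (h𝔼cl : IsClosed 𝔼) :
    IsCompact (choiMatrix '' 𝔼) := by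
  have himage : choiMatrix '' 𝔼 = ofChoiMatrix ⁻¹' 𝔼 := by
    ext J
    refine ⟨?_, fun hJ => ⟨_, hJ, choiMatrix_ofChoiMatrix J⟩⟩
    rintro ⟨E, hE, rfl⟩
    rwa [Set.mem_preimage, ofChoiMatrix_choiMatrix (h𝔼 E hE).1]
  have hbox : IsCompact (Set.univ.pi fun _ : Fin n × Fin n =>
      Set.univ.pi fun _ : Fin n × Fin n => Metric.closedBall (0 : ℂ) 1) :=
    isCompact_univ_pi fun _ => isCompact_univ_pi fun _ => isCompact_closedBall 0 1
  refine hbox.of_isClosed_subset (himage ▸ h𝔼cl.preimage continuous_ofChoiMatrix) ?_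
  rintro _ ⟨E, hE, rfl⟩ p - q -
  rw [mem_closedBall_zero_iff]
  exact ((posSemidef_choiMatrix (h𝔼 E hE).2.1).norm_apply_le_re_trace p q).trans
    (re_trace_choiMatrix_le_one (h𝔼 E hE).2.2)

theorem exists_posSemidef_separating_choiMatrix (h𝔼 : ∀ E ∈ 𝔼, IsCPTN E) (h𝔼ne : 𝔼.Nonempty)
    (h𝔼cv : Convex ℝ 𝔼) (h𝔼cl : IsClosed 𝔼) {F : SuperOp n} (hF : IsCPTN F)
    (hFE : ∀ E ∈ 𝔼, ¬IsCP (F - E)) :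
    ∃ W : Matrix (Fin n × Fin n) (Fin n × Fin n) ℂ, W.PosSemidef ∧ ∃ u : ℝ,
      (W * choiMatrix F).trace.re < u ∧ ∀ E ∈ 𝔼, u < (W * choiMatrix E).trace.re := by
  set D := choiMatrix '' 𝔼 + {P : Matrix (Fin n × Fin n) (Fin n × Fin n) ℂ | P.PosSemidef}
  have hDcl : IsClosed D :=
    isClosed_setOf_posSemidef.add_left_of_isCompact (isCompact_choiMatrix_image h𝔼 h𝔼cl)
  have hDcv : Convex ℝ D :=
    (h𝔼cv.is_linear_image isLinearMap_choiMatrix).add convex_setOf_posSemidef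
  have hFD : choiMatrix F ∉ D := by
    rintro ⟨_, ⟨E, hE, rfl⟩, P, hP, hsum⟩
    refine hFE E hE (isCP_of_posSemidef_choiMatrix ?_ ?_)
    · exact ⟨fun X Y => by simp [hF.1.map_add, (h𝔼 E hE).1.map_add]; abel,
        fun c X => by simp [hF.1.map_smul, (h𝔼 E hE).1.map_smul, smul_sub]⟩
    · rwa [show choiMatrix (F - E) = choiMatrix F - choiMatrix E from rfl, ← hsum,
        add_sub_cancel_left]
  obtain ⟨f, u, hfF, hfD⟩ := RCLike.geometric_hahn_banach_point_closed (𝕜 := ℂ) hDcv hDcl hFD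
  simp only [RCLike.re_to_complex] at hfF hfD
  obtain ⟨E₀, hE₀⟩ := h𝔼ne
  -- `D` contains the ray `J E₀ + t P` for every positive `P`.
  have hf_nonneg (P : Matrix (Fin n × Fin n) (Fin n × Fin n) ℂ) (hP : P.PosSemidef) :
      0 ≤ (f P).re := by
    refine nonneg_of_forall_lt_add_mul (u := u) (a := (f (choiMatrix E₀)).re) fun t ht => ?_
    have := hfD _ ⟨_, ⟨E₀, hE₀, rfl⟩, t • P, hP.smul ht, rfl⟩
    rwa [map_add, f.map_smul_of_tower, Complex.add_re, Complex.smul_re, smul_eq_mul] at this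
  obtain ⟨W, hW, hWf⟩ := exists_posSemidef_re_eq_re_trace_mul f.toLinearMap hf_nonneg
  refine ⟨W, hW, u, ?_, fun E hE => ?_⟩
  · rw [← hWf _ (posSemidef_choiMatrix hF.2.1).1]
    exact hfF
  · rw [← hWf _ (posSemidef_choiMatrix (h𝔼 E hE).2.1).1]
    exact hfD _ ⟨_, ⟨E, hE, rfl⟩, 0, PosSemidef.zero, add_zero _⟩

theorem exists_isEffect_separating (h𝔼 : ∀ E ∈ 𝔼, IsCPTN E) (h𝔼ne : 𝔼.Nonempty)
    (h𝔼cv : Convex ℝ 𝔼) (h𝔼cl : IsClosed 𝔼) {F : SuperOp n} (hF : IsCPTN F)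
    (hFE : ∀ E ∈ 𝔼, ¬IsCP (F - E)) :
    ∃ N : Matrix (Fin n × Fin n) (Fin n × Fin n) ℂ, IsEffect N ∧ ∃ c : ℝ,
      (N * tensorMap F n (maxEntangled n)).trace.re < c ∧
        ∀ E ∈ 𝔼, c ≤ (N * tensorMap E n (maxEntangled n)).trace.re := by
  obtain ⟨W, hW, u, hWF, hWE⟩ :=
    exists_posSemidef_separating_choiMatrix h𝔼 h𝔼ne h𝔼cv h𝔼cl hF hFE
  obtain ⟨c, hc, hN⟩ := hW.exists_isEffect_smul
  have hval (Φ : SuperOp n) :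
      (c • W * tensorMap Φ n (maxEntangled n)).trace.re = c * (W * choiMatrix Φ).trace.re := by
    rw [Matrix.smul_mul, trace_smul, Complex.smul_re, smul_eq_mul, choiMatrix]
  refine ⟨c • W, hN, c * u, ?_, fun E hE => ?_⟩
  · rw [hval]
    exact mul_lt_mul_of_pos_left hWF hc
  · rw [hval]
    exact mul_le_mul_of_nonneg_left (hWE E hE).le hc.le

end Separation

section Refinement

variable {n : ℕ} {𝔼 𝔽 : Set (SuperOp n)} {adj : SuperOp n → SuperOp n}

theorem exists_isEffect_demExp_lt (h𝔼 : ∀ E ∈ 𝔼, IsCPTN E) (h𝔼ne : 𝔼.Nonempty)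
    (h𝔼cv : Convex ℝ 𝔼) (h𝔼cl : IsClosed 𝔼) (h𝔽 : ∀ F ∈ 𝔽, IsCPTN F)
    (hadj𝔼 : ∀ E ∈ 𝔼, IsTraceAdjoint E (adj E)) (hadj𝔽 : ∀ F ∈ 𝔽, IsTraceAdjoint F (adj F))
    {F : SuperOp n} (hF : F ∈ 𝔽) (hFE : ∀ E ∈ 𝔼, ¬IsCP (F - E)) :
    ∃ N, IsEffect N ∧
      demExp {M | ∃ F ∈ 𝔽, ∃ N' ∈ ({N} : Set _), M = tensorMap (adj F) n N'} (maxEntangled n) <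
        demExp {M | ∃ E ∈ 𝔼, ∃ N' ∈ ({N} : Set _), M = tensorMap (adj E) n N'}
          (maxEntangled n) := by
  obtain ⟨N, hN, c, hNF, hNE⟩ := exists_isEffect_separating h𝔼 h𝔼ne h𝔼cv h𝔼cl (h𝔽 F hF) hFE
  obtain ⟨E₀, hE₀⟩ := h𝔼ne
  refine ⟨N, hN, ?_⟩
  calc _ ≤ (tensorMap (adj F) n N * maxEntangled n).trace.re := by
        refine demExp_le ⟨F, hF, N, rfl, rfl⟩ ?_
        rintro _ ⟨F', hF', _, rfl, rfl⟩
        exact re_trace_tensorMap_mul_nonneg (h𝔽 F' hF').2.1 (hadj𝔽 F' hF') hN.1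
          posSemidef_maxEntangled
    _ < c := by rwa [trace_tensorMap_mul_of_isTraceAdjoint (hadj𝔽 F hF)]
    _ ≤ _ := by
        refine le_demExp ⟨_, E₀, hE₀, N, rfl, rfl⟩ ?_
        rintro _ ⟨E, hE, _, rfl, rfl⟩
        rw [trace_tensorMap_mul_of_isTraceAdjoint (hadj𝔼 E hE)]
        exact hNE E hE

theorem demExp_mono_of_smyth {m : ℕ} (h𝔼 : ∀ E ∈ 𝔼, IsCP E) (h𝔽ne : 𝔽.Nonempty)
    (hadj𝔼 : ∀ E ∈ 𝔼, IsTraceAdjoint E (adj E)) (hadj𝔽 : ∀ F ∈ 𝔽, IsTraceAdjoint F (adj F))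
    (hsmyth : ∀ F ∈ 𝔽, ∃ E ∈ 𝔼, IsCP (F - E))
    {Ψ : Set (Matrix (Fin m × Fin n) (Fin m × Fin n) ℂ)} (hΨ : ∀ N ∈ Ψ, N.PosSemidef)
    {ρ : Matrix (Fin m × Fin n) (Fin m × Fin n) ℂ} (hρ : ρ.PosSemidef) :
    demExp {M | ∃ E ∈ 𝔼, ∃ N ∈ Ψ, M = tensorMap (adj E) m N} ρ ≤
      demExp {M | ∃ F ∈ 𝔽, ∃ N ∈ Ψ, M = tensorMap (adj F) m N} ρ := by
  rcases Ψ.eq_empty_or_nonempty with rfl | ⟨N₀, hN₀⟩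
  · simp
  obtain ⟨F₀, hF₀⟩ := h𝔽ne
  refine demExp_le_demExp ⟨_, F₀, hF₀, N₀, hN₀, rfl⟩ ?_ ?_
  · rintro _ ⟨E, hE, N, hN, rfl⟩
    exact re_trace_tensorMap_mul_nonneg (h𝔼 E hE) (hadj𝔼 E hE) (hΨ N hN) hρ
  · rintro _ ⟨F, hF, N, hN, rfl⟩
    obtain ⟨E, hE, hFE⟩ := hsmyth F hF
    refine ⟨_, ⟨E, hE, N, hN, rfl⟩, ?_⟩
    rw [trace_tensorMap_mul_of_isTraceAdjoint (hadj𝔼 E hE),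
      trace_tensorMap_mul_of_isTraceAdjoint (hadj𝔽 F hF)]
    exact re_trace_mul_tensorMap_le_of_isCP_sub hFE (hΨ N hN) hρ

end Refinement

theorem nondet_total_refinement_iff_smyth_general {n : ℕ}
    (𝔼 𝔽 : Set (Matrix (Fin n) (Fin n) ℂ → Matrix (Fin n) (Fin n) ℂ))
    (adj : (Matrix (Fin n) (Fin n) ℂ → Matrix (Fin n) (Fin n) ℂ) →
           (Matrix (Fin n) (Fin n) ℂ → Matrix (Fin n) (Fin n) ℂ))
    (h𝔼 : ∀ E ∈ 𝔼, IsCPTN E) (h𝔽 : ∀ F ∈ 𝔽, IsCPTN F)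
    (h𝔼ne : 𝔼.Nonempty) (h𝔽ne : 𝔽.Nonempty)
    (h𝔼cv : Convex ℝ 𝔼)
    (h𝔼cl : IsClosed 𝔼)
    (hadj : ∀ G, (G ∈ 𝔼 ∨ G ∈ 𝔽) →
      ∀ A B : Matrix (Fin n) (Fin n) ℂ, (G A * B).trace = (A * adj G B).trace) :
    -- 𝔼 ≤_T^s 𝔽 : every total-correctness specification of 𝔼 holds of 𝔽
    (∀ (m : ℕ) (Θ Ψ : Set (Matrix (Fin m × Fin n) (Fin m × Fin n) ℂ)),
        (∀ M ∈ Θ, IsEffect M) → (∀ N ∈ Ψ, IsEffect N) →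
        (∀ ρ : Matrix (Fin m × Fin n) (Fin m × Fin n) ℂ, IsDensity ρ →
          demExp Θ ρ ≤ demExp {M | ∃ E ∈ 𝔼, ∃ N ∈ Ψ, M = tensorMap (adj E) m N} ρ) →
        (∀ ρ : Matrix (Fin m × Fin n) (Fin m × Fin n) ℂ, IsDensity ρ →
          demExp Θ ρ ≤ demExp {M | ∃ F ∈ 𝔽, ∃ N ∈ Ψ, M = tensorMap (adj F) m N} ρ)) ↔
      -- Smyth order in the complete-positivity order
      (∀ F ∈ 𝔽, ∃ E ∈ 𝔼, IsCP (F - E)) := by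
  have hadj𝔼 E (hE : E ∈ 𝔼) : IsTraceAdjoint E (adj E) := hadj E (.inl hE)
  have hadj𝔽 F (hF : F ∈ 𝔽) : IsTraceAdjoint F (adj F) := hadj F (.inr hF)
  refine ⟨fun href F hF => ?_, fun hsmyth m Θ Ψ _ hΨ hspec ρ hρ => ?_⟩
  · by_contra! hFE
    obtain ⟨N, hN, hlt⟩ := exists_isEffect_demExp_lt h𝔼 h𝔼ne h𝔼cv h𝔼cl h𝔽 hadj𝔼 hadj𝔽 hF hFE
    have hΘ : ∀ M ∈ {M | ∃ E ∈ 𝔼, ∃ N' ∈ ({N} : Set _), M = tensorMap (adj E) n N'},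
        IsEffect M := by
      rintro _ ⟨E, hE, _, rfl, rfl⟩
      exact isEffect_tensorMap_of_isTraceAdjoint (h𝔼 E hE).2.1 (h𝔼 E hE).2.2 (hadj𝔼 E hE) hN
    exact hlt.not_ge <| href n _ {N} hΘ (by simpa using hN) (fun _ _ => le_rfl) _
      isDensity_maxEntangled
  · exact (hspec ρ hρ).trans <| demExp_mono_of_smyth (fun E hE => (h𝔼 E hE).2.1) h𝔽ne
      hadj𝔼 hadj𝔽 hsmyth (fun N hN => (hΨ N hN).1) hρ.1

theorem nondet_total_refinement_iff_smyth {n : ℕ}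
    (𝔼 𝔽 : Set (Matrix (Fin n) (Fin n) ℂ → Matrix (Fin n) (Fin n) ℂ))
    (adj : (Matrix (Fin n) (Fin n) ℂ → Matrix (Fin n) (Fin n) ℂ) →
           (Matrix (Fin n) (Fin n) ℂ → Matrix (Fin n) (Fin n) ℂ))
    (h𝔼 : ∀ E ∈ 𝔼, IsCPTN E) (h𝔽 : ∀ F ∈ 𝔽, IsCPTN F)
    (h𝔼ne : 𝔼.Nonempty) (h𝔽ne : 𝔽.Nonempty)
    (h𝔼cv : Convex ℝ 𝔼) (h𝔽cv : Convex ℝ 𝔽)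
    (h𝔼cl : IsClosed 𝔼) (h𝔽cl : IsClosed 𝔽)
    (hadj : ∀ G, (G ∈ 𝔼 ∨ G ∈ 𝔽) →
      ∀ A B : Matrix (Fin n) (Fin n) ℂ, (G A * B).trace = (A * adj G B).trace) :
    -- 𝔼 ≤_T^s 𝔽 : every total-correctness specification of 𝔼 holds of 𝔽
    (∀ (m : ℕ) (Θ Ψ : Set (Matrix (Fin m × Fin n) (Fin m × Fin n) ℂ)),
        (∀ M ∈ Θ, IsEffect M) → (∀ N ∈ Ψ, IsEffect N) →
        (∀ ρ : Matrix (Fin m × Fin n) (Fin m × Fin n) ℂ, IsDensity ρ →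
          demExp Θ ρ ≤ demExp {M | ∃ E ∈ 𝔼, ∃ N ∈ Ψ, M = tensorMap (adj E) m N} ρ) →
        (∀ ρ : Matrix (Fin m × Fin n) (Fin m × Fin n) ℂ, IsDensity ρ →
          demExp Θ ρ ≤ demExp {M | ∃ F ∈ 𝔽, ∃ N ∈ Ψ, M = tensorMap (adj F) m N} ρ)) ↔
      -- Smyth order in the complete-positivity order
      (∀ F ∈ 𝔽, ∃ E ∈ 𝔼, IsCP (F - E)) :=
  nondet_total_refinement_iff_smyth_general 𝔼 𝔽 adj h𝔼 h𝔽 h𝔼ne h𝔽ne h𝔼cv h𝔼cl hadj
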